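/- arXiv:1305.4288 — 3 statements merged into one kernel-verified Lean document; each statement's English description precedes it below -/
import Mathlib

section
/- Let D consist of upwards closed dependencies and let φ₁, φ₂ be FO(D)-formulas. Then φ₁ ∨ φ₂ is logically equivalent (satisfied by exactly the same model-team pairs) to (φ₁ᶠ ∨ φ₂ᶠ) ∧ (φ₁ ↾ φ₁ᶠ) ∧ (φ₂ ↾ φ₂ᶠ). -/
/-- Formulas of first-order logic with team semantics, in negation normal form,
over a relational signature `σ` (with arities `ar`) extended with dependency
atoms indexed by `δ` (with arities `dar`).  Equality and inequality literals
are between tuples of variables; variables are natural numbers. -/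
inductive TForm (σ : Type) (ar : σ → ℕ) (δ : Type) (dar : δ → ℕ) : Type
  | rel (r : σ) (ts : Fin (ar r) → ℕ)
  | nrel (r : σ) (ts : Fin (ar r) → ℕ)
  | eq (k : ℕ) (x y : Fin k → ℕ)
  | neq (k : ℕ) (x y : Fin k → ℕ)
  | dep (d : δ) (xs : Fin (dar d) → ℕ)
  | and (φ ψ : TForm σ ar δ dar)
  | or (φ ψ : TForm σ ar δ dar)
  | ex (v : ℕ) (φ : TForm σ ar δ dar)
  | all (v : ℕ) (φ : TForm σ ar δ dar)

/-- A team over a model with carrier `M`: a set of assignments. -/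
abbrev Team (M : Type) := Set (ℕ → M)

/-- `X(x̄)`: the relation of values of the tuple `x̄` in the team `X`. -/
def Team.rel {M : Type} (X : Team M) {k : ℕ} (xs : Fin k → ℕ) : Set (Fin k → M) :=
  {t | ∃ s ∈ X, t = fun i => s (xs i)}

/-- An interpretation of a family of dependencies: for each index, an
isomorphism-invariant-style class of pairs (carrier, relation). -/
abbrev DepFam (δ : Type) (dar : δ → ℕ) := ∀ d : δ, ∀ M : Type, Set (Fin (dar d) → M) → Prop

/-- Lax team semantics. -/
def tsat {σ : Type} {ar : σ → ℕ} {δ : Type} {dar : δ → ℕ} {M : Type}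
    (RI : ∀ r : σ, Set (Fin (ar r) → M)) (DI : DepFam δ dar) :
    TForm σ ar δ dar → Team M → Prop
  | .rel r ts, X => ∀ s ∈ X, (fun i => s (ts i)) ∈ RI r
  | .nrel r ts, X => ∀ s ∈ X, (fun i => s (ts i)) ∉ RI r
  | .eq _ x y, X => ∀ s ∈ X, (fun i => s (x i)) = fun i => s (y i)
  | .neq _ x y, X => ∀ s ∈ X, (fun i => s (x i)) ≠ fun i => s (y i)
  | .dep d xs, X => DI d M (X.rel xs)
  | .and φ ψ, X => tsat RI DI φ X ∧ tsat RI DI ψ X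
  | .or φ ψ, X => ∃ Y Z, X = Y ∪ Z ∧ tsat RI DI φ Y ∧ tsat RI DI ψ Z
  | .ex v φ, X => ∃ H : (ℕ → M) → Set M, (∀ s ∈ X, (H s).Nonempty) ∧
      tsat RI DI φ {s' | ∃ s ∈ X, ∃ m ∈ H s, s' = Function.update s v m}
  | .all v φ, X => tsat RI DI φ {s' | ∃ s ∈ X, ∃ m : M, s' = Function.update s v m}

/-- Tarski (single-assignment) semantics; dependency atoms are treated as
trivially true (they are only meaningful for first-order formulas). -/
def ssat {σ : Type} {ar : σ → ℕ} {δ : Type} {dar : δ → ℕ} {M : Type}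
    (RI : ∀ r : σ, Set (Fin (ar r) → M)) :
    TForm σ ar δ dar → (ℕ → M) → Prop
  | .rel r ts, s => (fun i => s (ts i)) ∈ RI r
  | .nrel r ts, s => (fun i => s (ts i)) ∉ RI r
  | .eq _ x y, s => (fun i => s (x i)) = fun i => s (y i)
  | .neq _ x y, s => (fun i => s (x i)) ≠ fun i => s (y i)
  | .dep _ _, _ => True
  | .and φ ψ, s => ssat RI φ s ∧ ssat RI ψ s
  | .or φ ψ, s => ssat RI φ s ∨ ssat RI ψ s
  | .ex v φ, s => ∃ m : M, ssat RI φ (Function.update s v m)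
  | .all v φ, s => ∀ m : M, ssat RI φ (Function.update s v m)

/-- A formula is first-order if it contains no dependency atoms. -/
def TForm.isFO {σ : Type} {ar : σ → ℕ} {δ : Type} {dar : δ → ℕ} :
    TForm σ ar δ dar → Prop
  | .dep _ _ => False
  | .and φ ψ => φ.isFO ∧ ψ.isFO
  | .or φ ψ => φ.isFO ∧ ψ.isFO
  | .ex _ φ => φ.isFO
  | .all _ φ => φ.isFO
  | _ => True

/-- Free variables of a formula. -/
def TForm.free {σ : Type} {ar : σ → ℕ} {δ : Type} {dar : δ → ℕ} :
    TForm σ ar δ dar → Set ℕ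
  | .rel _ ts => Set.range ts
  | .nrel _ ts => Set.range ts
  | .eq _ x y => Set.range x ∪ Set.range y
  | .neq _ x y => Set.range x ∪ Set.range y
  | .dep _ xs => Set.range xs
  | .and φ ψ => φ.free ∪ ψ.free
  | .or φ ψ => φ.free ∪ ψ.free
  | .ex v φ => φ.free \ {v}
  | .all v φ => φ.free \ {v}

/-- The flattening `φᶠ`: replace every dependency atom by the trivially true
atom `⊤` (here rendered as the empty-tuple equality). -/
def TForm.flatten {σ : Type} {ar : σ → ℕ} {δ : Type} {dar : δ → ℕ} :
    TForm σ ar δ dar → TForm σ ar δ dar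
  | .dep _ _ => .eq 0 Fin.elim0 Fin.elim0
  | .and φ ψ => .and φ.flatten ψ.flatten
  | .or φ ψ => .or φ.flatten ψ.flatten
  | .ex v φ => .ex v φ.flatten
  | .all v φ => .all v φ.flatten
  | φ => φ

/-- Negation normal form of the negation of a (first-order) formula. -/
def TForm.neg {σ : Type} {ar : σ → ℕ} {δ : Type} {dar : δ → ℕ} :
    TForm σ ar δ dar → TForm σ ar δ dar
  | .rel r ts => .nrel r ts
  | .nrel r ts => .rel r ts
  | .eq k x y => .neq k x y
  | .neq k x y => .eq k x y
  | .dep d xs => .dep d xs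
  | .and φ ψ => .or φ.neg ψ.neg
  | .or φ ψ => .and φ.neg ψ.neg
  | .ex v φ => .all v φ.neg
  | .all v φ => .ex v φ.neg

/-- `(ψ ↾ θ) := (¬θ) ∨ (θ ∧ ψ)`. -/
def TForm.restrict {σ : Type} {ar : σ → ℕ} {δ : Type} {dar : δ → ℕ}
    (ψ θ : TForm σ ar δ dar) : TForm σ ar δ dar :=
  .or θ.neg (.and θ ψ)

/-- A family of dependencies is upwards closed. -/
def UpClosed {δ : Type} {dar : δ → ℕ} (DI : DepFam δ dar) : Prop :=
  ∀ (d : δ) (M : Type) (R S : Set (Fin (dar d) → M)), R ⊆ S → DI d M R → DI d M S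

/-- The constancy dependency of arity `n`. -/
def ConstD (n : ℕ) : ∀ M : Type, Set (Fin n → M) → Prop :=
  fun _ R => ∀ t ∈ R, ∀ t' ∈ R, t = t'

/-! Every team satisfying `φ` consists of assignments satisfying `φᶠ`, and when all dependencies
are upwards closed, `φ` stays true if a satisfying team is enlarged by further assignments
satisfying `φᶠ`. Hence `φ₁ ∨ φ₂` holds on `X` iff the `φ₁ᶠ`- and `φ₂ᶠ`-parts of `X` cover `X`
and each `φᵢ` holds on the whole `φᵢᶠ`-part of `X`. That is what the right-hand side says,
since for first-order `θ` the formula `ψ ↾ θ` evaluates `ψ` on the `θ`-part of the team. -/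

namespace TForm

variable {σ : Type} {ar : σ → ℕ} {δ : Type} {dar : δ → ℕ}

theorem isFO_flatten (φ : TForm σ ar δ dar) : φ.flatten.isFO := by
  induction φ <;> simp [flatten, isFO, *]

theorem isFO.neg {φ : TForm σ ar δ dar} (h : φ.isFO) : φ.neg.isFO := by
  induction φ <;> simp_all [TForm.neg, isFO]

end TForm

section TeamSemantics

variable {σ : Type} {ar : σ → ℕ} {δ : Type} {dar : δ → ℕ} {M : Type}
  {RI : ∀ r : σ, Set (Fin (ar r) → M)} {DI : DepFam δ dar}

theorem ssat_flatten (φ : TForm σ ar δ dar) (s : ℕ → M) :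
    ssat RI φ.flatten s ↔ ssat RI φ s := by
  induction φ generalizing s <;> simp [TForm.flatten, ssat, *]

theorem ssat_neg {φ : TForm σ ar δ dar} (hφ : φ.isFO) (s : ℕ → M) :
    ssat RI φ.neg s ↔ ¬ssat RI φ s := by
  induction φ generalizing s with
  | dep => exact hφ.elim
  | and φ ψ ih₁ ih₂ => simp only [TForm.neg, ssat, ih₁ hφ.1, ih₂ hφ.2]; tauto
  | or φ ψ ih₁ ih₂ => simp only [TForm.neg, ssat, ih₁ hφ.1, ih₂ hφ.2]; tauto
  | ex v φ ih => simp only [TForm.neg, ssat, ih hφ, not_exists]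
  | all v φ ih => simp only [TForm.neg, ssat, ih hφ, not_forall]
  | _ => simp [TForm.neg, ssat]

theorem ssat_of_tsat {φ : TForm σ ar δ dar} {X : Team M} (h : tsat RI DI φ X) {s : ℕ → M}
    (hs : s ∈ X) : ssat RI φ s := by
  induction φ generalizing X s with
  | dep => trivial
  | and φ ψ ih₁ ih₂ => exact ⟨ih₁ h.1 hs, ih₂ h.2 hs⟩
  | or φ ψ ih₁ ih₂ =>
    obtain ⟨Y, Z, rfl, hY, hZ⟩ := h
    exact hs.imp (ih₁ hY) (ih₂ hZ)
  | ex v φ ih =>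
    obtain ⟨H, hne, hsat⟩ := h
    obtain ⟨m, hm⟩ := hne s hs
    exact ⟨m, ih hsat ⟨s, hs, m, hm, rfl⟩⟩
  | all v φ ih => exact fun m => ih h ⟨s, hs, m, rfl⟩
  | _ => exact h s hs

theorem tsat_of_forall_ssat {φ : TForm σ ar δ dar} (hφ : φ.isFO) {X : Team M}
    (h : ∀ s ∈ X, ssat RI φ s) : tsat RI DI φ X := by
  induction φ generalizing X with
  | dep => exact hφ.elim
  | and φ ψ ih₁ ih₂ =>
    exact ⟨ih₁ hφ.1 fun s hs => (h s hs).1, ih₂ hφ.2 fun s hs => (h s hs).2⟩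
  | or φ ψ ih₁ ih₂ =>
    refine ⟨{s ∈ X | ssat RI φ s}, {s ∈ X | ssat RI ψ s}, ?_,
      ih₁ hφ.1 fun s hs => hs.2, ih₂ hφ.2 fun s hs => hs.2⟩
    exact (Set.sep_or.symm.trans (Set.sep_eq_self_iff_mem_true.2 h)).symm
  | ex v φ ih =>
    refine ⟨fun s => {m | ssat RI φ (Function.update s v m)}, h, ih hφ ?_⟩
    rintro _ ⟨s, -, m, hm, rfl⟩
    exact hm
  | all v φ ih =>
    refine ih hφ ?_
    rintro _ ⟨s, hs, m, rfl⟩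
    exact h s hs m
  | _ => exact h

theorem tsat_iff_forall_ssat {φ : TForm σ ar δ dar} (hφ : φ.isFO) {X : Team M} :
    tsat RI DI φ X ↔ ∀ s ∈ X, ssat RI φ s :=
  ⟨fun h _ => ssat_of_tsat h, tsat_of_forall_ssat hφ⟩

/-- The `θ`-part of the team is forced on the right disjunct, as the left one satisfies `¬θ`. -/
theorem tsat_restrict_iff {ψ θ : TForm σ ar δ dar} (hθ : θ.isFO) {X : Team M} :
    tsat RI DI (ψ.restrict θ) X ↔ tsat RI DI ψ {s ∈ X | ssat RI θ s} := by
  constructor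
  · rintro ⟨Y, Z, rfl, hY, hθZ, hψZ⟩
    convert hψZ using 1
    ext s
    refine ⟨fun ⟨hs, hθs⟩ => hs.resolve_left fun hsY => ?_,
      fun hs => ⟨Or.inr hs, ssat_of_tsat hθZ hs⟩⟩
    exact (ssat_neg hθ s).1 (ssat_of_tsat hY hsY) hθs
  · intro h
    refine ⟨{s ∈ X | ¬ssat RI θ s}, {s ∈ X | ssat RI θ s}, ?_, ?_,
      tsat_of_forall_ssat hθ fun s hs => hs.2, h⟩
    · exact (Set.sep_or.symm.trans (Set.sep_eq_self_iff_mem_true.2 fun s _ => em' _)).symm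
    · exact tsat_of_forall_ssat hθ.neg fun s hs => (ssat_neg hθ s).2 hs.2

theorem tsat_of_subset_of_forall_ssat (hup : UpClosed DI) {φ : TForm σ ar δ dar}
    {X Y : Team M} (hYX : Y ⊆ X) (hY : tsat RI DI φ Y) (hX : ∀ s ∈ X, ssat RI φ s) :
    tsat RI DI φ X := by
  induction φ generalizing X Y with
  | dep d xs =>
    refine hup d M _ _ ?_ hY
    rintro _ ⟨s, hs, rfl⟩
    exact ⟨s, hYX hs, rfl⟩
  | and φ ψ ih₁ ih₂ =>
    exact ⟨ih₁ hYX hY.1 fun s hs => (hX s hs).1, ih₂ hYX hY.2 fun s hs => (hX s hs).2⟩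
  | or φ ψ ih₁ ih₂ =>
    obtain ⟨Y₁, Y₂, rfl, hY₁, hY₂⟩ := hY
    refine ⟨Y₁ ∪ {s ∈ X | ssat RI φ s}, Y₂ ∪ {s ∈ X | ssat RI ψ s}, ?_,
      ih₁ Set.subset_union_left hY₁ ?_, ih₂ Set.subset_union_left hY₂ ?_⟩
    · refine subset_antisymm (fun s hs => ?_) ?_
      · exact (hX s hs).elim (fun h => .inl (.inr ⟨hs, h⟩)) (fun h => .inr (.inr ⟨hs, h⟩))
      · rintro s ((hs | ⟨hs, -⟩) | (hs | ⟨hs, -⟩))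
        exacts [hYX (.inl hs), hs, hYX (.inr hs), hs]
    · rintro s (hs | ⟨-, hs⟩)
      exacts [ssat_of_tsat hY₁ hs, hs]
    · rintro s (hs | ⟨-, hs⟩)
      exacts [ssat_of_tsat hY₂ hs, hs]
  | ex v φ ih =>
    obtain ⟨H, -, hsat⟩ := hY
    -- keep the witnesses chosen on `Y`, and add all witnesses of `φᶠ` elsewhere
    refine ⟨fun s => {m ∈ H s | s ∈ Y} ∪ {m | ssat RI φ (Function.update s v m)},
      fun s hs => (hX s hs).imp fun _ => .inr, ih ?_ hsat ?_⟩
    · rintro _ ⟨s, hs, m, hm, rfl⟩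
      exact ⟨s, hYX hs, m, .inl ⟨hm, hs⟩, rfl⟩
    · rintro _ ⟨s, -, m, ⟨hm, hsY⟩ | hm, rfl⟩
      exacts [ssat_of_tsat hsat ⟨s, hsY, m, hm, rfl⟩, hm]
  | all v φ ih =>
    refine ih ?_ hY ?_
    · rintro _ ⟨s, hs, m, rfl⟩
      exact ⟨s, hYX hs, m, rfl⟩
    · rintro _ ⟨s, hs, m, rfl⟩
      exact hX s hs m
  | _ => exact hX

theorem tsat_or_iff_of_upClosed (hup : UpClosed DI) {φ₁ φ₂ : TForm σ ar δ dar} {X : Team M} :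
    tsat RI DI (.or φ₁ φ₂) X ↔ (∀ s ∈ X, ssat RI φ₁ s ∨ ssat RI φ₂ s) ∧
      tsat RI DI φ₁ {s ∈ X | ssat RI φ₁ s} ∧ tsat RI DI φ₂ {s ∈ X | ssat RI φ₂ s} := by
  constructor
  · rintro ⟨Y, Z, rfl, hY, hZ⟩
    refine ⟨fun s hs => hs.imp (ssat_of_tsat hY) (ssat_of_tsat hZ),
      tsat_of_subset_of_forall_ssat hup ?_ hY fun s hs => hs.2,
      tsat_of_subset_of_forall_ssat hup ?_ hZ fun s hs => hs.2⟩
    · exact fun s hs => ⟨.inl hs, ssat_of_tsat hY hs⟩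
    · exact fun s hs => ⟨.inr hs, ssat_of_tsat hZ hs⟩
  · rintro ⟨hcover, h₁, h₂⟩
    refine ⟨_, _, ?_, h₁, h₂⟩
    exact (Set.sep_or.symm.trans (Set.sep_eq_self_iff_mem_true.2 hcover)).symm

end TeamSemantics

/-- **Disjunction elimination for upwards closed dependencies.**
`φ₁ ∨ φ₂ ≡ (φ₁ᶠ ∨ φ₂ᶠ) ∧ (φ₁ ↾ φ₁ᶠ) ∧ (φ₂ ↾ φ₂ᶠ)`. -/
theorem or_clean {σ : Type} {ar : σ → ℕ} {δ : Type} {dar : δ → ℕ} {M : Type}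
    (RI : ∀ r : σ, Set (Fin (ar r) → M)) (DI : DepFam δ dar) (hup : UpClosed DI)
    (φ₁ φ₂ : TForm σ ar δ dar) (X : Team M) :
    tsat RI DI (.or φ₁ φ₂) X ↔
      tsat RI DI (.and (.or φ₁.flatten φ₂.flatten)
        (.and (φ₁.restrict φ₁.flatten) (φ₂.restrict φ₂.flatten))) X := by
  have hcover : tsat RI DI (.or φ₁.flatten φ₂.flatten) X ↔
      ∀ s ∈ X, ssat RI φ₁ s ∨ ssat RI φ₂ s := by
    rw [tsat_iff_forall_ssat (φ := .or _ _) ⟨φ₁.isFO_flatten, φ₂.isFO_flatten⟩]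
    simp only [ssat, ssat_flatten]
  have hpart (φ : TForm σ ar δ dar) :
      tsat RI DI (φ.restrict φ.flatten) X ↔ tsat RI DI φ {s ∈ X | ssat RI φ s} := by
    simp only [tsat_restrict_iff φ.isFO_flatten, ssat_flatten]
  rw [tsat_or_iff_of_upClosed hup, ← hcover, ← hpart, ← hpart]
  rfl
end

section
/- For any formula φ of FO(D) (D arbitrary) and any model M with at least two elements, the possibility operator ◇φ (M ⊨_X ◇φ iff there is a nonempty Y ⊆ X with M ⊨_Y φ) is logically equivalent to ∃u₀ ∃u₁ ∃v (=(u₀) ∧ =(u₁) ∧ (v = u₀ ∨ v = u₁) ∧ (φ ↾ v = u₁) ∧ ≠(v)). -/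
/-- The inconstancy dependency of arity 1: `≠(v)`, i.e. `|X(v)| > 1`. -/
def InconstD : ∀ M : Type, Set (Fin 1 → M) → Prop :=
  fun _ R => ∃ t ∈ R, ∃ t' ∈ R, t ≠ t'


/-!
Given a nonempty `Y ⊆ X` satisfying `φ`, pick `a ≠ b`, put `u₀ := a` and `u₁ := b` everywhere,
and let `v` take the value `a` on every assignment and, in addition, `b` on the assignments
coming from `Y`. Then `≠(v)` holds because `Y` is nonempty, and the part of the team where
`v = u₁` is a copy of `Y` up to the fresh variables. Conversely, `u₀` is constant while `v` is
not, so `v = u₁` somewhere; the part of the supplemented team where `v = u₁` satisfies `φ`, and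
forgetting `u₀, u₁, v` turns it into a nonempty subteam of `X`. Both directions rest on locality:
lax team semantics only sees the values of the free variables.
-/

open Set Function

theorem tuple_eq_of_eqOn_range {M : Type} {s t : ℕ → M} {k : ℕ} {xs : Fin k → ℕ}
    (h : EqOn s t (range xs)) : (fun i => s (xs i)) = fun i => t (xs i) :=
  eqOn_range.1 h

theorem eqOn_update_update {M : Type} {s t : ℕ → M} {V : Set ℕ} {w : ℕ}
    (h : EqOn s t (V \ {w})) (m : M) : EqOn (update s w m) (update t w m) V := by
  intro x hx
  rcases eq_or_ne x w with rfl | hxw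
  · simp
  · simp only [update_of_ne hxw]
    exact h ⟨hx, hxw⟩

theorem eqOn_update_of_notMem {M : Type} {s : ℕ → M} {V : Set ℕ} {w : ℕ} (hw : w ∉ V) (m : M) :
    EqOn s (update s w m) V :=
  fun _ hx => (update_of_ne (ne_of_mem_of_not_mem hx hw) m s).symm

namespace Team

variable {M : Type}

/-- The supplemented team `X[H/w]` of lax semantics. -/
def supplement (X : Team M) (w : ℕ) (H : (ℕ → M) → Set M) : Team M :=
  {s' | ∃ s ∈ X, ∃ m ∈ H s, s' = update s w m}

/-- `Y` and `Z` coincide once every assignment is restricted to `V`. -/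
def AgreeOn (V : Set ℕ) (Y Z : Team M) : Prop :=
  (∀ s ∈ Y, ∃ t ∈ Z, EqOn s t V) ∧ ∀ t ∈ Z, ∃ s ∈ Y, EqOn s t V

namespace AgreeOn

variable {V W : Set ℕ} {X Y Z : Team M}

theorem symm (h : AgreeOn V Y Z) : AgreeOn V Z Y :=
  ⟨fun t ht => (h.2 t ht).imp fun _ ⟨hs, e⟩ => ⟨hs, e.symm⟩,
    fun s hs => (h.1 s hs).imp fun _ ⟨ht, e⟩ => ⟨ht, e.symm⟩⟩

theorem trans (h : AgreeOn V X Y) (h' : AgreeOn V Y Z) : AgreeOn V X Z := by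
  refine ⟨fun s hs => ?_, fun u hu => ?_⟩
  · obtain ⟨t, ht, e⟩ := h.1 s hs
    obtain ⟨u, hu, e'⟩ := h'.1 t ht
    exact ⟨u, hu, e.trans e'⟩
  · obtain ⟨t, ht, e'⟩ := h'.2 u hu
    obtain ⟨s, hs, e⟩ := h.2 t ht
    exact ⟨s, hs, e.trans e'⟩

theorem mono (h : AgreeOn V Y Z) (hWV : W ⊆ V) : AgreeOn W Y Z :=
  ⟨fun s hs => (h.1 s hs).imp fun _ ⟨ht, e⟩ => ⟨ht, e.mono hWV⟩,
    fun t ht => (h.2 t ht).imp fun _ ⟨hs, e⟩ => ⟨hs, e.mono hWV⟩⟩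

theorem nonempty (h : AgreeOn V Y Z) (hY : Y.Nonempty) : Z.Nonempty :=
  let ⟨s, hs⟩ := hY
  let ⟨t, ht, _⟩ := h.1 s hs
  ⟨t, ht⟩

theorem forall_mem {P : (ℕ → M) → Prop} (h : AgreeOn V Y Z)
    (hP : ∀ s t, EqOn s t V → P s → P t) (hY : ∀ s ∈ Y, P s) : ∀ t ∈ Z, P t :=
  fun t ht =>
    let ⟨s, hs, e⟩ := h.2 t ht
    hP s t e (hY s hs)

theorem rel_eq {k : ℕ} {xs : Fin k → ℕ} (h : AgreeOn (range xs) Y Z) :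
    Y.rel xs = Z.rel xs := by
  ext u
  constructor
  · rintro ⟨s, hs, rfl⟩
    obtain ⟨t, ht, e⟩ := h.1 s hs
    exact ⟨t, ht, tuple_eq_of_eqOn_range e⟩
  · rintro ⟨t, ht, rfl⟩
    obtain ⟨s, hs, e⟩ := h.2 t ht
    exact ⟨s, hs, (tuple_eq_of_eqOn_range e).symm⟩

theorem subteam (h : AgreeOn V Y Z) {Y₁ : Team M} (hY₁ : Y₁ ⊆ Y) :
    AgreeOn V Y₁ {t ∈ Z | ∃ s ∈ Y₁, EqOn s t V} :=
  ⟨fun s hs =>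
    let ⟨t, ht, e⟩ := h.1 s (hY₁ hs)
    ⟨t, ⟨ht, s, hs, e⟩, e⟩,
    fun _ ht => ht.2⟩

theorem eq_union {Y₁ Y₂ : Team M} (h : AgreeOn V (Y₁ ∪ Y₂) Z) :
    Z = {t ∈ Z | ∃ s ∈ Y₁, EqOn s t V} ∪ {t ∈ Z | ∃ s ∈ Y₂, EqOn s t V} := by
  ext t
  refine ⟨fun ht => ?_, by rintro (⟨ht, -⟩ | ⟨ht, -⟩) <;> exact ht⟩
  obtain ⟨s, hs | hs, e⟩ := h.2 t ht
  exacts [Or.inl ⟨ht, s, hs, e⟩, Or.inr ⟨ht, s, hs, e⟩]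

end AgreeOn

variable {V : Set ℕ} {w : ℕ} {X Y Z : Team M}

theorem agreeOn_supplement {H : (ℕ → M) → Set M} (hw : w ∉ V)
    (hH : ∀ s ∈ X, (H s).Nonempty) : AgreeOn V X (X.supplement w H) := by
  refine ⟨fun s hs => ?_, ?_⟩
  · obtain ⟨m, hm⟩ := hH s hs
    exact ⟨_, ⟨s, hs, m, hm, rfl⟩, eqOn_update_of_notMem hw m⟩
  · rintro _ ⟨s, hs, m, -, rfl⟩
    exact ⟨s, hs, eqOn_update_of_notMem hw m⟩

theorem agreeOn_supplement_supplement {H H' : (ℕ → M) → Set M}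
    (hYZ : ∀ s ∈ Y, ∀ m ∈ H s, ∃ t ∈ Z, EqOn s t (V \ {w}) ∧ m ∈ H' t)
    (hZY : ∀ t ∈ Z, ∀ m ∈ H' t, ∃ s ∈ Y, EqOn s t (V \ {w}) ∧ m ∈ H s) :
    AgreeOn V (Y.supplement w H) (Z.supplement w H') := by
  refine ⟨?_, ?_⟩
  · rintro _ ⟨s, hs, m, hm, rfl⟩
    obtain ⟨t, ht, e, hm'⟩ := hYZ s hs m hm
    exact ⟨_, ⟨t, ht, m, hm', rfl⟩, eqOn_update_update e m⟩
  · rintro _ ⟨t, ht, m, hm, rfl⟩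
    obtain ⟨s, hs, e, hm'⟩ := hZY t ht m hm
    exact ⟨_, ⟨s, hs, m, hm', rfl⟩, eqOn_update_update e m⟩

end Team

section Semantics

variable {σ : Type} {ar : σ → ℕ} {δ : Type} {dar : δ → ℕ} {M : Type}
  {RI : ∀ r : σ, Set (Fin (ar r) → M)} {DI : DepFam δ dar}

theorem tsat_all_iff {w : ℕ} {φ : TForm σ ar δ dar} {X : Team M} :
    tsat RI DI (.all w φ) X ↔ tsat RI DI φ (X.supplement w fun _ => univ) := by
  have : X.supplement w (fun _ => univ) = {s' | ∃ s ∈ X, ∃ m : M, s' = update s w m} := by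
    ext
    simp [Team.supplement]
  rw [this]
  rfl

theorem tsat_of_agreeOn {φ : TForm σ ar δ dar} {Y Z : Team M} (h : Team.AgreeOn φ.free Y Z)
    (hY : tsat RI DI φ Y) : tsat RI DI φ Z := by
  induction φ generalizing Y Z with
  | rel r ts | nrel r ts =>
    exact h.forall_mem (fun s t e hs => by rwa [← tuple_eq_of_eqOn_range e]) hY
  | eq k x y | neq k x y =>
    refine h.forall_mem (fun s t e hs => ?_) hY
    rwa [← tuple_eq_of_eqOn_range (e.mono subset_union_left),
      ← tuple_eq_of_eqOn_range (e.mono subset_union_right)]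
  | dep d xs =>
    show DI d M (Z.rel xs)
    rwa [← h.rel_eq]
  | and φ ψ ihφ ihψ =>
    exact ⟨ihφ (h.mono subset_union_left) hY.1, ihψ (h.mono subset_union_right) hY.2⟩
  | or φ ψ ihφ ihψ =>
    obtain ⟨Y₁, Y₂, rfl, h₁, h₂⟩ := hY
    exact ⟨_, _, h.eq_union, ihφ ((h.subteam subset_union_left).mono subset_union_left) h₁,
      ihψ ((h.subteam subset_union_right).mono subset_union_right) h₂⟩
  | ex w φ ih =>
    obtain ⟨H, hH, hφ⟩ := hY
    refine ⟨fun t => {m | ∃ s ∈ Y, EqOn s t (φ.free \ {w}) ∧ m ∈ H s}, ?_, ih ?_ hφ⟩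
    · intro t ht
      obtain ⟨s, hs, e⟩ := h.2 t ht
      obtain ⟨m, hm⟩ := hH s hs
      exact ⟨m, s, hs, e, hm⟩
    · refine Team.agreeOn_supplement_supplement (fun s hs m hm => ?_) fun t _ m hm => hm
      obtain ⟨t, ht, e⟩ := h.1 s hs
      exact ⟨t, ht, e, s, hs, e, hm⟩
  | all w φ ih =>
    rw [tsat_all_iff] at hY ⊢
    refine ih (Team.agreeOn_supplement_supplement ?_ ?_) hY
    · exact fun s hs m _ => (h.1 s hs).imp fun t ⟨ht, e⟩ => ⟨ht, e, trivial⟩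
    · exact fun t ht m _ => (h.2 t ht).imp fun s ⟨hs, e⟩ => ⟨hs, e, trivial⟩

end Semantics

theorem constD_rel_iff {M : Type} {T : Team M} {u : ℕ} :
    ConstD 1 M (T.rel fun _ => u) ↔ ∀ t ∈ T, ∀ t' ∈ T, t u = t' u := by
  constructor
  · intro h t ht t' ht'
    exact congrFun (h _ ⟨t, ht, rfl⟩ _ ⟨t', ht', rfl⟩) 0
  · rintro h _ ⟨t, ht, rfl⟩ _ ⟨t', ht', rfl⟩
    exact funext fun _ => h t ht t' ht'

theorem inconstD_rel_iff {M : Type} {T : Team M} {u : ℕ} :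
    InconstD M (T.rel fun _ => u) ↔ ∃ t ∈ T, ∃ t' ∈ T, t u ≠ t' u := by
  constructor
  · rintro ⟨_, ⟨t, ht, rfl⟩, _, ⟨t', ht', rfl⟩, hne⟩
    exact ⟨t, ht, t', ht', fun h => hne (funext fun _ => h)⟩
  · rintro ⟨t, ht, t', ht', hne⟩
    exact ⟨_, ⟨t, ht, rfl⟩, _, ⟨t', ht', rfl⟩, fun h => hne (congrFun h 0)⟩

section Atoms

variable {σ : Type} {ar : σ → ℕ} {δ : Type} {dar : δ → ℕ} {M : Type}
  {RI : ∀ r : σ, Set (Fin (ar r) → M)} {DI : DepFam δ dar} {T : Team M}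

theorem tsat_and_iff {φ ψ : TForm σ ar δ dar} :
    tsat RI DI (.and φ ψ) T ↔ tsat RI DI φ T ∧ tsat RI DI ψ T :=
  Iff.rfl

theorem tsat_dep_iff {d : δ} {xs : Fin (dar d) → ℕ} :
    tsat RI DI (.dep d xs) T ↔ DI d M (T.rel xs) :=
  Iff.rfl

theorem tsat_eq_var_iff {x y : ℕ} :
    tsat RI DI (.eq 1 (fun _ => x) fun _ => y) T ↔ ∀ t ∈ T, t x = t y := by
  simp [tsat, funext_iff]

theorem tsat_or_eq_var_iff {x y z : ℕ} :
    tsat RI DI (.or (.eq 1 (fun _ => x) fun _ => y) (.eq 1 (fun _ => x) fun _ => z)) T ↔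
      ∀ t ∈ T, t x = t y ∨ t x = t z := by
  constructor
  · rintro ⟨A, B, rfl, hA, hB⟩ t (ht | ht)
    exacts [Or.inl (tsat_eq_var_iff.1 hA t ht), Or.inr (tsat_eq_var_iff.1 hB t ht)]
  · intro h
    refine ⟨{t ∈ T | t x = t y}, {t ∈ T | t x = t z}, ?_,
      tsat_eq_var_iff.2 fun t ht => ht.2, tsat_eq_var_iff.2 fun t ht => ht.2⟩
    rw [← sep_or, eq_comm, sep_eq_self_iff_mem_true]
    exact h

theorem tsat_restrict_eq_iff {ψ : TForm σ ar δ dar} {k : ℕ} {x y : Fin k → ℕ} :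
    tsat RI DI (ψ.restrict (.eq k x y)) T ↔
      tsat RI DI ψ {t ∈ T | (fun i => t (x i)) = fun i => t (y i)} := by
  constructor
  · rintro ⟨A, B, rfl, hA, hB, hψ⟩
    convert hψ
    ext t
    constructor
    · rintro ⟨ht | ht, he⟩
      exacts [absurd he (hA t ht), ht]
    · exact fun ht => ⟨Or.inr ht, hB t ht⟩
  · intro h
    refine ⟨_, _, ?_, fun t (ht : t ∈ {t ∈ T | _ ≠ _}) => ht.2, fun t ht => ht.2, h⟩
    rw [← sep_or, eq_comm, sep_eq_self_iff_mem_true]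
    exact fun _ _ => em' _

end Atoms

section Possibility

variable {σ : Type} {ar : σ → ℕ} {δ : Type} {dar : δ → ℕ} {M : Type}
  {RI : ∀ r : σ, Set (Fin (ar r) → M)} {DI : DepFam (δ ⊕ Bool) (Sum.elim dar fun _ => 1)}
  {φ : TForm σ ar (δ ⊕ Bool) (Sum.elim dar fun _ => 1)} {u₀ u₁ v : ℕ}

def possibilityBody (φ : TForm σ ar (δ ⊕ Bool) (Sum.elim dar fun _ => 1)) (u₀ u₁ v : ℕ) :
    TForm σ ar (δ ⊕ Bool) (Sum.elim dar fun _ => 1) :=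
  .and (.and (.and (.and
    (.dep (.inr false) fun _ => u₀)
    (.dep (.inr false) fun _ => u₁))
    (.or (.eq 1 (fun _ => v) fun _ => u₀) (.eq 1 (fun _ => v) fun _ => u₁)))
    (φ.restrict (.eq 1 (fun _ => v) fun _ => u₁)))
    (.dep (.inr true) fun _ => v)

theorem tsat_possibilityBody_iff (hc : DI (.inr false) = ConstD 1)
    (hi : DI (.inr true) = InconstD) {T : Team M} :
    tsat RI DI (possibilityBody φ u₀ u₁ v) T ↔
      (∀ t ∈ T, ∀ t' ∈ T, t u₀ = t' u₀) ∧ (∀ t ∈ T, ∀ t' ∈ T, t u₁ = t' u₁) ∧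
      (∀ t ∈ T, t v = t u₀ ∨ t v = t u₁) ∧ tsat RI DI φ {t ∈ T | t v = t u₁} ∧
      ∃ t ∈ T, ∃ t' ∈ T, t v ≠ t' v := by
  simp only [possibilityBody, tsat_and_iff, tsat_dep_iff, hc, hi, tsat_or_eq_var_iff,
    tsat_restrict_eq_iff, funext_iff, forall_const, and_assoc]
  exact and_congr constD_rel_iff <| and_congr constD_rel_iff <| and_congr Iff.rfl <|
    and_congr Iff.rfl inconstD_rel_iff

theorem tsat_possibility_of_subteam [Nontrivial M] (hc : DI (.inr false) = ConstD 1)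
    (hi : DI (.inr true) = InconstD) (h01 : u₀ ≠ u₁) (hv0 : v ≠ u₀) (hv1 : v ≠ u₁)
    (hu₀ : u₀ ∉ φ.free) (hu₁ : u₁ ∉ φ.free) (hv : v ∉ φ.free) {X Y : Team M} (hYX : Y ⊆ X)
    (hY : Y.Nonempty) (hφ : tsat RI DI φ Y) :
    tsat RI DI (.ex u₀ (.ex u₁ (.ex v (possibilityBody φ u₀ u₁ v)))) X := by
  obtain ⟨a, b, hab⟩ := exists_pair_ne M
  set X₂ := (X.supplement u₀ fun _ => {a}).supplement u₁ fun _ => {b}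
  have hXX₂ : Team.AgreeOn φ.free X X₂ :=
    (Team.agreeOn_supplement hu₀ fun _ _ => singleton_nonempty a).trans
      (Team.agreeOn_supplement hu₁ fun _ _ => singleton_nonempty b)
  let H : (ℕ → M) → Set M := fun s => {c | c = a ∨ c = b ∧ ∃ y ∈ Y, EqOn y s φ.free}
  set T := X₂.supplement v H
  suffices hT : tsat RI DI (possibilityBody φ u₀ u₁ v) T from
    ⟨_, fun _ _ => singleton_nonempty a, _, fun _ _ => singleton_nonempty b, H,
      fun _ _ => ⟨a, Or.inl rfl⟩, hT⟩
  have hTval : ∀ t ∈ T, t u₀ = a ∧ t u₁ = b ∧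
      (t v = a ∨ t v = b ∧ ∃ y ∈ Y, EqOn y t φ.free) := by
    rintro _ ⟨_, ⟨_, ⟨s, -, _, rfl, rfl⟩, _, rfl, rfl⟩, c, hcH, rfl⟩
    simp only [update_self, update_of_ne hv0.symm, update_of_ne hv1.symm, update_of_ne h01,
      true_and]
    exact hcH.imp_right <| And.imp_right fun ⟨y, hy, e⟩ =>
      ⟨y, hy, e.trans (eqOn_update_of_notMem hv c)⟩
  have hYB : Team.AgreeOn φ.free Y {t ∈ T | t v = t u₁} := by
    refine ⟨fun y hy => ?_, fun t ⟨ht, htv⟩ => ?_⟩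
    · obtain ⟨s, hs, e⟩ := hXX₂.1 y (hYX hy)
      have ht : update s v b ∈ T := ⟨s, hs, b, Or.inr ⟨rfl, y, hy, e⟩, rfl⟩
      refine ⟨_, ⟨ht, ?_⟩, e.trans (eqOn_update_of_notMem hv b)⟩
      rw [(hTval _ ht).2.1, update_self]
    · obtain ⟨-, h1, ha | ⟨-, hy⟩⟩ := hTval t ht
      exacts [absurd (ha.symm.trans (htv.trans h1)) hab, hy]
  obtain ⟨y, hy⟩ := hY
  obtain ⟨s, hs, e⟩ := hXX₂.1 y (hYX hy)
  refine (tsat_possibilityBody_iff hc hi).2 ⟨?_, ?_, ?_, tsat_of_agreeOn hYB hφ, ?_⟩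
  · exact fun t ht t' ht' => (hTval t ht).1.trans (hTval t' ht').1.symm
  · exact fun t ht t' ht' => (hTval t ht).2.1.trans (hTval t' ht').2.1.symm
  · intro t ht
    obtain ⟨h0, h1, ha | ⟨hb, -⟩⟩ := hTval t ht
    exacts [Or.inl (ha.trans h0.symm), Or.inr (hb.trans h1.symm)]
  · refine ⟨_, ⟨s, hs, a, Or.inl rfl, rfl⟩, _, ⟨s, hs, b, Or.inr ⟨rfl, y, hy, e⟩, rfl⟩, ?_⟩
    simpa only [update_self] using hab

theorem exists_subteam_of_tsat_possibility (hc : DI (.inr false) = ConstD 1)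
    (hi : DI (.inr true) = InconstD) (hu₀ : u₀ ∉ φ.free) (hu₁ : u₁ ∉ φ.free)
    (hv : v ∉ φ.free) {X : Team M}
    (h : tsat RI DI (.ex u₀ (.ex u₁ (.ex v (possibilityBody φ u₀ u₁ v)))) X) :
    ∃ Y : Team M, Y ⊆ X ∧ Y.Nonempty ∧ tsat RI DI φ Y := by
  obtain ⟨H₀, h₀, H₁, h₁, H₂, h₂, hT⟩ := h
  set T := ((X.supplement u₀ H₀).supplement u₁ H₁).supplement v H₂
  replace hT : tsat RI DI (possibilityBody φ u₀ u₁ v) T := hT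
  have hXT : Team.AgreeOn φ.free X T :=
    ((Team.agreeOn_supplement hu₀ h₀).trans (Team.agreeOn_supplement hu₁ h₁)).trans
      (Team.agreeOn_supplement hv h₂)
  obtain ⟨hu₀c, -, hvor, hφ, t, ht, t', ht', hne⟩ := (tsat_possibilityBody_iff hc hi).1 hT
  have hB : {t ∈ T | t v = t u₁}.Nonempty := by
    rcases hvor t ht with h | h
    · rcases hvor t' ht' with h' | h'
      · exact absurd (h.trans ((hu₀c t ht t' ht').trans h'.symm)) hne
      · exact ⟨t', ht', h'⟩
    · exact ⟨t, ht, h⟩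
  have hBX := hXT.symm.subteam (sep_subset T fun t => t v = t u₁)
  exact ⟨_, sep_subset _ _, hBX.nonempty hB, tsat_of_agreeOn hBX hφ⟩

end Possibility

/-- **Definability of the possibility operator.**  Over models with at least two
elements, `◇φ` (some nonempty subteam satisfies `φ`) is logically equivalent to
`∃u₀ ∃u₁ ∃v (=(u₀) ∧ =(u₁) ∧ (v = u₀ ∨ v = u₁) ∧ (φ ↾ v = u₁) ∧ ≠(v))`,
for fresh distinct variables `u₀, u₁, v`.  Dependency atoms are indexed by
`δ ⊕ Bool`, with `.inr false` the constancy atom and `.inr true` the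
inconstancy atom (both unary). -/
theorem possibility_def {σ : Type} {ar : σ → ℕ} {δ : Type} {dar : δ → ℕ}
    (DI : DepFam δ dar) {M : Type} [Nontrivial M]
    (RI : ∀ r : σ, Set (Fin (ar r) → M))
    (φ : TForm σ ar (δ ⊕ Bool) (Sum.elim dar fun _ => 1))
    (u₀ u₁ v : ℕ) (h01 : u₀ ≠ u₁) (hv0 : v ≠ u₀) (hv1 : v ≠ u₁)
    (hu₀ : u₀ ∉ φ.free) (hu₁ : u₁ ∉ φ.free) (hv : v ∉ φ.free)
    (X : Team M) :
    (∃ Y : Team M, Y ⊆ X ∧ Y.Nonempty ∧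
        tsat RI (fun d => match d with
          | .inl d => DI d | .inr false => ConstD 1 | .inr true => InconstD) φ Y) ↔
    tsat RI (fun d => match d with
        | .inl d => DI d | .inr false => ConstD 1 | .inr true => InconstD)
      (.ex u₀ (.ex u₁ (.ex v
        (.and (.and (.and (.and
          (.dep (.inr false) fun _ => u₀)
          (.dep (.inr false) fun _ => u₁))
          (.or (.eq 1 (fun _ => v) fun _ => u₀) (.eq 1 (fun _ => v) fun _ => u₁)))
          (φ.restrict (.eq 1 (fun _ => v) fun _ => u₁)))
          (.dep (.inr true) fun _ => v))))) X := by
  constructor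
  · rintro ⟨Y, hYX, hY, hφ⟩
    exact tsat_possibility_of_subteam rfl rfl h01 hv0 hv1 hu₀ hu₁ hv hYX hY hφ
  · exact exists_subteam_of_tsat_possibility rfl rfl hu₀ hu₁ hv
end

section
/- (Boundedness preservation) Let D be a family of bounded upwards closed dependencies. Then for every FO(D)-formula φ, every model M and every team X: if M ⊨_X φ then there exists Y ⊆ X with |Y| ≤ ht(φ) such that M ⊨_Y φ, where ht(φ) is the sum over all occurrences of dependency atoms D x̄ in φ of the least cardinal κ for which D is κ-bounded (first-order literals contribute 0). -/
/-- A dependency `D` of arity `n` is `κ`-bounded: whenever a team satisfies the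
atom, some subteam of cardinality at most `κ` satisfies it. -/
def BoundedBy (n : ℕ) (D : ∀ M : Type, Set (Fin n → M) → Prop) (κ : Cardinal) : Prop :=
  ∀ (M : Type) (X : Team M) (xs : Fin n → ℕ), D M (X.rel xs) →
    ∃ Y ⊆ X, Cardinal.mk Y ≤ κ ∧ D M (Y.rel xs)

/-- The height of a formula, given the bounding cardinal `κ d` of each
dependency: literals contribute `0`, a dependency atom contributes `κ d`, and
heights add over connectives. -/
def TForm.ht {σ : Type} {ar : σ → ℕ} {δ : Type} {dar : δ → ℕ} (κ : δ → Cardinal) :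
    TForm σ ar δ dar → Cardinal
  | .dep d _ => κ d
  | .and φ ψ => φ.ht κ + ψ.ht κ
  | .or φ ψ => φ.ht κ + ψ.ht κ
  | .ex _ φ => φ.ht κ
  | .all _ φ => φ.ht κ
  | _ => 0

/-!
Strengthen the claim: for upwards closed dependencies there is `Y ⊆ X` with `|Y| ≤ ht(φ)` such
that *every* `Z` with `Y ⊆ Z ⊆ X` satisfies `φ`. Literals are flat, so `Y = ∅` works; for an
atom, take the small subteam given by boundedness and use upward closure. For `∧` take the union
of the two witnesses; for `∨` split `Z` along the split of `X`, adding back the witness on each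
side. For the quantifiers, pick for each assignment of the witness of the extended team one
assignment of `X` it comes from; these form a witness of no larger cardinality.
-/

universe u

lemma Team.rel_mono {M : Type} {X Y : Team M} (h : X ⊆ Y) {k : ℕ} (xs : Fin k → ℕ) :
    X.rel xs ⊆ Y.rel xs := fun _ ⟨s, hs, ht⟩ => ⟨s, h hs, ht⟩

namespace Set

variable {α β : Type u}

def HoldsBetween (P : Set α → Prop) (Y X : Set α) : Prop :=
  ∀ Z, Y ⊆ Z → Z ⊆ X → P Z

lemma holdsBetween_empty_of_forall {p : α → Prop} {X : Set α} (h : ∀ s ∈ X, p s) :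
    HoldsBetween (fun Z => ∀ s ∈ Z, p s) ∅ X :=
  fun _ _ hZX s hs => h s (hZX hs)

lemma HoldsBetween.and {P Q : Set α → Prop} {X Y₁ Y₂ : Set α}
    (h₁ : HoldsBetween P Y₁ X) (h₂ : HoldsBetween Q Y₂ X) :
    HoldsBetween (fun Z => P Z ∧ Q Z) (Y₁ ∪ Y₂) X :=
  fun Z hYZ hZX => ⟨h₁ Z (subset_union_left.trans hYZ) hZX,
    h₂ Z (subset_union_right.trans hYZ) hZX⟩

lemma HoldsBetween.union {P Q : Set α → Prop} {X₁ X₂ Y₁ Y₂ : Set α}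
    (hY₁ : Y₁ ⊆ X₁) (hY₂ : Y₂ ⊆ X₂) (h₁ : HoldsBetween P Y₁ X₁) (h₂ : HoldsBetween Q Y₂ X₂) :
    HoldsBetween (fun Z => ∃ Z₁ Z₂, Z = Z₁ ∪ Z₂ ∧ P Z₁ ∧ Q Z₂) (Y₁ ∪ Y₂) (X₁ ∪ X₂) := by
  intro Z hYZ hZX
  refine ⟨Z ∩ X₁ ∪ Y₁, Z ∩ X₂ ∪ Y₂, ?_, h₁ _ subset_union_right
    (union_subset inter_subset_right hY₁), h₂ _ subset_union_right
    (union_subset inter_subset_right hY₂)⟩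
  have hZ : Z = Z ∩ X₁ ∪ Z ∩ X₂ := by rw [← inter_union_distrib_left, inter_eq_left.2 hZX]
  apply Subset.antisymm
  · exact hZ.subset.trans (union_subset_union subset_union_left subset_union_left)
  · exact union_subset (union_subset inter_subset_left (subset_union_left.trans hYZ))
      (union_subset inter_subset_left (subset_union_right.trans hYZ))

/-- The quantifier step, with `R s s'` saying that `s'` extends `s` by a value for the
quantified variable. -/
lemma HoldsBetween.of_image {R : α → β → Prop} {P : Set β → Prop} {X : Set α} {Y' : Set β}
    (hY' : Y' ⊆ {b | ∃ a ∈ X, R a b}) (h : HoldsBetween P Y' {b | ∃ a ∈ X, R a b}) :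
    ∃ Y ⊆ X, Cardinal.mk Y ≤ Cardinal.mk Y' ∧
      HoldsBetween (fun Z => P {b | ∃ a ∈ Z, R a b}) Y X := by
  choose f hfX hfR using fun b : Y' => hY' b.2
  refine ⟨range f, range_subset_iff.2 hfX, Cardinal.mk_range_le, fun Z hYZ hZX => h _ ?_ ?_⟩
  · exact fun b hb => ⟨f ⟨b, hb⟩, hYZ ⟨⟨b, hb⟩, rfl⟩, hfR ⟨b, hb⟩⟩
  · exact fun b ⟨a, ha, hab⟩ => ⟨a, hZX ha, hab⟩

end Set

open Set in
theorem TForm.exists_holdsBetween_of_tsat {σ : Type} {ar : σ → ℕ} {δ : Type} {dar : δ → ℕ}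
    {DI : DepFam δ dar} (hup : UpClosed DI) {κ : δ → Cardinal}
    (hκ : ∀ d : δ, BoundedBy (dar d) (DI d) (κ d))
    {M : Type} (RI : ∀ r : σ, Set (Fin (ar r) → M)) (φ : TForm σ ar δ dar) :
    ∀ X : Team M, tsat RI DI φ X →
      ∃ Y ⊆ X, Cardinal.mk Y ≤ φ.ht κ ∧ HoldsBetween (tsat RI DI φ) Y X := by
  induction φ with
  | rel | nrel | eq | neq =>
    exact fun X h => ⟨∅, empty_subset X, by simp [TForm.ht], holdsBetween_empty_of_forall h⟩
  | dep d xs =>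
    intro X h
    obtain ⟨Y, hYX, hcard, hY⟩ := hκ d M X xs h
    exact ⟨Y, hYX, hcard, fun Z hYZ _ => hup d M _ _ (Team.rel_mono hYZ xs) hY⟩
  | and φ ψ ihφ ihψ =>
    rintro X ⟨hφ, hψ⟩
    obtain ⟨Y₁, hY₁, hc₁, h₁⟩ := ihφ X hφ
    obtain ⟨Y₂, hY₂, hc₂, h₂⟩ := ihψ X hψ
    exact ⟨Y₁ ∪ Y₂, union_subset hY₁ hY₂,
      (Cardinal.mk_union_le _ _).trans (add_le_add hc₁ hc₂), h₁.and h₂⟩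
  | or φ ψ ihφ ihψ =>
    rintro X ⟨X₁, X₂, rfl, hφ, hψ⟩
    obtain ⟨Y₁, hY₁, hc₁, h₁⟩ := ihφ X₁ hφ
    obtain ⟨Y₂, hY₂, hc₂, h₂⟩ := ihψ X₂ hψ
    exact ⟨Y₁ ∪ Y₂, union_subset_union hY₁ hY₂,
      (Cardinal.mk_union_le _ _).trans (add_le_add hc₁ hc₂), HoldsBetween.union hY₁ hY₂ h₁ h₂⟩
  | ex v φ ih =>
    rintro X ⟨H, hH, hφ⟩
    obtain ⟨Y', hY'X, hc, h'⟩ := ih _ hφ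
    obtain ⟨Y, hYX, hYY', hY⟩ := HoldsBetween.of_image hY'X h'
    exact ⟨Y, hYX, hYY'.trans hc, fun Z hYZ hZX => ⟨H, fun s hs => hH s (hZX hs), hY Z hYZ hZX⟩⟩
  | all v φ ih =>
    intro X hφ
    obtain ⟨Y', hY'X, hc, h'⟩ := ih _ hφ
    obtain ⟨Y, hYX, hYY', hY⟩ := HoldsBetween.of_image hY'X h'
    exact ⟨Y, hYX, hYY'.trans hc, hY⟩

/-- **Boundedness preservation.**  If every dependency in `D` is upwards closed
and `κ d` is the least cardinal bounding it, then every team satisfying an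
`FO(D)`-formula `φ` has a subteam of cardinality at most `ht(φ)` satisfying `φ`. -/
theorem boundedness {σ : Type} {ar : σ → ℕ} {δ : Type} {dar : δ → ℕ}
    (DI : DepFam δ dar) (hup : UpClosed DI) (κ : δ → Cardinal)
    (hκ : ∀ d : δ, IsLeast {c : Cardinal | BoundedBy (dar d) (DI d) c} (κ d))
    {M : Type} (RI : ∀ r : σ, Set (Fin (ar r) → M))
    (φ : TForm σ ar δ dar) (X : Team M) (h : tsat RI DI φ X) :
    ∃ Y ⊆ X, Cardinal.mk Y ≤ φ.ht κ ∧ tsat RI DI φ Y := by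
  obtain ⟨Y, hYX, hcard, hY⟩ := φ.exists_holdsBetween_of_tsat hup (fun d => (hκ d).1) RI X h
  exact ⟨Y, hYX, hcard, hY Y subset_rfl hYX⟩
end
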